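/- arXiv:1608.08460 — 2 statements merged into one kernel-verified Lean document; each statement's English description precedes it below -/
import Mathlib

section
/- Let K = ∑_{i=0}^{d−1} |i⟩⟨φ_i| be an operator on ℂ^d. If for every maximally coherent state |ψ⟩ the state K|ψ⟩⟨ψ|K† is diagonal in the reference basis, then at most one of the vectors φ_i is nonzero, i.e., K = |i₀⟩⟨φ| for some index i₀ and some vector φ. -/
/-!
Write `ψ = c · (e^{iθ_j})_j` and `w = Kψ`. Then `K|ψ⟩⟨ψ|K† = |w⟩⟨w|`, and `|w⟩⟨w|` is diagonal
exactly when at most one entry of `w` is nonzero. With phases `θ_j = j t` the `i`-th entry of `w`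
is `c · P_i(e^{it})`, where `P_i = ∑_j K_{ij} X^j` is the `i`-th row polynomial. A nonzero
polynomial has only finitely many roots while the unit circle is infinite, so some `t` makes
`P_i(e^{it}) ≠ 0` for every nonzero row `i` at once; for that `ψ`, at most one row of `K` is nonzero.
-/

open Matrix Polynomial Complex

namespace Polynomial

variable {R : Type*} [Semiring R] [DecidableEq R]

theorem eval_ofFn {n : ℕ} (v : Fin n → R) (x : R) :
    (ofFn n v).eval x = ∑ i, v i * x ^ (i : ℕ) := by
  simp [ofFn_eq_sum_monomial, eval_finsetSum]

theorem ofFn_eq_zero_iff {n : ℕ} {v : Fin n → R} : ofFn n v = 0 ↔ v = 0 :=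
  (injective_ofFn n).eq_iff' (map_zero _)

theorem exists_eval_exp_mul_I_ne_zero {p : ℂ[X]} (hp : p ≠ 0) :
    ∃ t : ℝ, p.eval (exp (t * I)) ≠ 0 := by
  by_contra! h
  have : Infinite (Set.Ioc (-Real.pi) Real.pi) :=
    (Set.Ioc_infinite (neg_lt_self Real.pi_pos)).to_subtype
  have : Infinite Circle := .of_injective _ Circle.argEquiv.symm.injective
  refine hp (eq_zero_of_infinite_isRoot p
    ((Set.infinite_range_of_injective (α := Circle) Circle.coe_injective).mono ?_))
  rintro _ ⟨z, rfl⟩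
  simpa [← Circle.coe_exp] using h (arg z)

end Polynomial

namespace Matrix

variable {m n : Type*}

theorem mul_vecMulVec_star_mul_conjTranspose {α : Type*} [Semiring α] [StarRing α] [Fintype n]
    (K : Matrix m n α) (v : n → α) :
    K * vecMulVec v (star v) * Kᴴ = vecMulVec (K *ᵥ v) (star (K *ᵥ v)) := by
  rw [mul_vecMulVec, vecMulVec_mul, star_mulVec]

theorem IsDiag.eq_zero_or_eq_zero_of_vecMulVec_star {α : Type*} [Semiring α] [StarRing α]
    [NoZeroDivisors α] {w : m → α} (h : (vecMulVec w (star w)).IsDiag) {i k : m} (hik : i ≠ k) :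
    w i = 0 ∨ w k = 0 := by
  simpa [vecMulVec_apply] using h hik

theorem exists_phases_mulVec_ne_zero [Fintype m] {d : ℕ} (K : Matrix m (Fin d) ℂ) :
    ∃ θ : Fin d → ℝ, ∀ i, K i ≠ 0 → (K *ᵥ fun j => exp (I * θ j)) i ≠ 0 := by
  classical
  have hp : ∏ i with K i ≠ 0, ofFn d (K i) ≠ 0 :=
    Finset.prod_ne_zero_iff.2 fun i hi => ofFn_eq_zero_iff.not.2 (Finset.mem_filter.1 hi).2
  obtain ⟨t, ht⟩ := exists_eval_exp_mul_I_ne_zero hp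
  refine ⟨fun j => j * t, fun i hi => ?_⟩
  have hrow : (K *ᵥ fun j => exp (I * (j * t : ℝ))) i = (ofFn d (K i)).eval (exp (t * I)) := by
    simp only [mulVec, dotProduct, eval_ofFn, ← exp_nat_mul]
    congr! 3
    push_cast
    ring
  rw [eval_prod, Finset.prod_ne_zero_iff] at ht
  rw [hrow]
  exact ht i (by simpa using hi)

theorem exists_eq_of_pairwise_row_eq_zero [Nonempty m] [DecidableEq m] {α : Type*} [Zero α]
    (K : Matrix m n α) (h : ∀ i k, i ≠ k → K i = 0 ∨ K k = 0) :
    ∃ i₀, K = of fun i j => if i = i₀ then K i₀ j else 0 := by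
  by_cases hK : ∀ i, K i = 0
  · exact ⟨Classical.arbitrary m, ext fun i j => by simp [hK]⟩
  obtain ⟨i₀, hi₀⟩ := not_forall.1 hK
  refine ⟨i₀, ext fun i j => ?_⟩
  by_cases hi : i = i₀
  · simp [hi]
  · simp [hi, (h i i₀ hi).resolve_right hi₀]

end Matrix

/-- If the operator `K = ∑_i |i⟩⟨φ_i|` on `ℂ^d` is such that the state
`K|ψ⟩⟨ψ|K†` is diagonal in the reference basis for every maximally coherent state
`|ψ⟩ = (1/√d) ∑_j e^{iθ_j}|j⟩`, then at most one row of `K` is nonzero, i.e.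
`K = |i₀⟩⟨φ|` for some index `i₀` and some vector `φ`. -/
theorem kraus_of_selective_coherence_breaking (d : ℕ) (hd : 0 < d)
    (K : Matrix (Fin d) (Fin d) ℂ)
    (h : ∀ θ : Fin d → ℝ,
      (K *
        Matrix.vecMulVec
          (fun j => ((1 / Real.sqrt d : ℝ) : ℂ) * Complex.exp (Complex.I * (θ j : ℝ)))
          (fun j => star (((1 / Real.sqrt d : ℝ) : ℂ) * Complex.exp (Complex.I * (θ j : ℝ))))
        * Kᴴ).IsDiag) :
    ∃ (i₀ : Fin d) (φ : Fin d → ℂ),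
      K = Matrix.of fun i j => if i = i₀ then star (φ j) else 0 := by
  have : Nonempty (Fin d) := ⟨⟨0, hd⟩⟩
  set c : ℂ := ((1 / √d : ℝ) : ℂ)
  have hc : c ≠ 0 := by simp [c, hd.ne']
  obtain ⟨θ, hθ⟩ := K.exists_phases_mulVec_ne_zero
  have hdiag := h θ
  rw [show (fun j => star (c * exp (I * θ j))) = star fun j => c * exp (I * θ j) from rfl,
    mul_vecMulVec_star_mul_conjTranspose,
    show (fun j => c * exp (I * θ j)) = c • fun j => exp (I * θ j) from rfl, mulVec_smul] at hdiag
  have hrows : ∀ i k, i ≠ k → K i = 0 ∨ K k = 0 := fun i k hik => by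
    by_contra! hne
    rcases hdiag.eq_zero_or_eq_zero_of_vecMulVec_star hik with h0 | h0 <;>
      simp only [Pi.smul_apply, smul_eq_mul, mul_eq_zero, hc, false_or] at h0
    exacts [hθ i hne.1 h0, hθ k hne.2 h0]
  obtain ⟨i₀, hi₀⟩ := K.exists_eq_of_pairwise_row_eq_zero hrows
  exact ⟨i₀, star (K i₀), by simpa using hi₀⟩
end

section
/- A quantum channel Φ on ℂ^d is both strictly incoherent and coherence breaking if and only if it admits a Kraus representation {K_{ij}} with K_{ij} = d_{ij} |π_i(j)⟩⟨j|, where each π_i is a permutation of {0,…,d−1} and ∑_i |d_{ij}|² = 1 for each j. -/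
/-!
A strictly incoherent Kraus operator is a permuted diagonal matrix, `M = P_π diag(c)`, so the
diagonal part of `M ρ Mᴴ` is `∑_j |c_j|² ρ_jj |π j⟩⟨π j|`: the output of the rank-one operators
`c_j |π j⟩⟨j|`. A coherence breaking channel has diagonal output on density matrices, hence by
linearity on all matrices, since positive matrices span; so a coherence breaking SIO coincides
with its dephasing, which has the rank-one Kraus form. Conversely each rank-one operator
`c |π j⟩⟨j|` is an SIO Kraus operator (with `c` supported at `j`) sending every matrix to a
diagonal one, and `∑ Kᴴ K = 1` reads `∑_n |c_{nj}|² = 1`.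
-/

open Matrix ComplexOrder

/-- A strictly incoherent operation (SIO): a channel admitting a Kraus decomposition with
operators of the form `M_n = ∑_j d_{nj} |π_n(j)⟩⟨j|` for permutations `π_n`. -/
def IsSIO {d : ℕ} (Φ : Matrix (Fin d) (Fin d) ℂ → Matrix (Fin d) (Fin d) ℂ) : Prop :=
  ∃ (N : ℕ) (c : Fin N → Fin d → ℂ) (π : Fin N → Equiv.Perm (Fin d)),
    (∑ n, (Matrix.of fun a b => if a = π n b then c n b else 0)ᴴ *
        (Matrix.of fun a b => if a = π n b then c n b else 0) = 1) ∧
    ∀ ρ, Φ ρ = ∑ n, (Matrix.of fun a b => if a = π n b then c n b else 0) * ρ *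
        (Matrix.of fun a b => if a = π n b then c n b else 0)ᴴ

/-- A coherence breaking channel: an incoherent channel (a Kraus decomposition whose
operators map diagonal matrices to diagonal matrices) whose output is diagonal on every
density matrix. -/
def IsCBCfn {d : ℕ} (Φ : Matrix (Fin d) (Fin d) ℂ → Matrix (Fin d) (Fin d) ℂ) : Prop :=
  (∃ (N : ℕ) (K : Fin N → Matrix (Fin d) (Fin d) ℂ),
    (∑ n, (K n)ᴴ * K n = 1) ∧
    (∀ n (A : Matrix (Fin d) (Fin d) ℂ), A.IsDiag → (K n * A * (K n)ᴴ).IsDiag) ∧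
    ∀ ρ, Φ ρ = ∑ n, K n * ρ * (K n)ᴴ) ∧
  ∀ ρ : Matrix (Fin d) (Fin d) ℂ, ρ.PosSemidef → ρ.trace = 1 → (Φ ρ).IsDiag

namespace Matrix

variable {n α : Type*} [DecidableEq n]

open scoped Matrix.Norms.L2Operator MatrixOrder in
theorem isDiag_of_isDiag_on_density [Fintype n]
    (L : Matrix n n ℂ →ₗ[ℂ] Matrix n n ℂ)
    (h : ∀ ρ : Matrix n n ℂ, ρ.PosSemidef → ρ.trace = 1 → (L ρ).IsDiag) (X : Matrix n n ℂ) :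
    (L X).IsDiag := by
  have hX : X ∈ Submodule.span ℂ {A : Matrix n n ℂ | 0 ≤ A} :=
    CStarAlgebra.span_nonneg (A := Matrix n n ℂ) ▸ Submodule.mem_top
  induction hX using Submodule.span_induction with
  | mem A hA =>
    rw [Set.mem_ofPred_eq, nonneg_iff_posSemidef] at hA
    obtain htr | htr := eq_or_ne A.trace 0
    · rw [hA.trace_eq_zero_iff.mp htr, map_zero]
      exact isDiag_zero
    · rw [← smul_inv_smul₀ htr A, map_smul]
      refine (h _ (hA.smul (inv_nonneg.mpr hA.trace_nonneg)) ?_).smul _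
      rw [trace_smul, smul_eq_mul, inv_mul_cancel₀ htr]
  | zero => rw [map_zero]; exact isDiag_zero
  | add A B _ _ hA hB => rw [map_add]; exact hA.add hB
  | smul x A _ hA => rw [map_smul]; exact hA.smul x

def krausMap [Fintype n] [CommSemiring α] [StarRing α] {ι : Type*} [Fintype ι]
    (K : ι → Matrix n n α) : Matrix n n α →ₗ[α] Matrix n n α :=
  ∑ i, LinearMap.mulLeftRight α (K i, (K i)ᴴ)

theorem krausMap_apply [Fintype n] [CommSemiring α] [StarRing α] {ι : Type*} [Fintype ι]
    (K : ι → Matrix n n α) (ρ : Matrix n n α) :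
    krausMap K ρ = ∑ i, K i * ρ * (K i)ᴴ := by
  simp [krausMap, LinearMap.mulLeftRight_apply]

def sioKraus [Zero α] (c : n → α) (π : Equiv.Perm n) : Matrix n n α :=
  of fun a b => if a = π b then c b else 0

theorem sioKraus_eq_submatrix [Zero α] (c : n → α) (π : Equiv.Perm n) :
    sioKraus c π = (diagonal c).submatrix π.symm id := by
  ext a b
  simp only [sioKraus, of_apply, submatrix_apply, id, diagonal_apply, Equiv.symm_apply_eq]
  split_ifs with h <;> simp [h]

theorem sioKraus_pi_single [Zero α] (π : Equiv.Perm n) (j : n) (x : α) :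
    sioKraus (Pi.single j x) π = single (π j) j x := by
  ext a b
  by_cases hb : b = j <;> by_cases ha : a = π b <;> simp_all [sioKraus, eq_comm]

theorem sum_single_perm_eq_diagonal [Fintype n] [AddCommMonoid α] (π : Equiv.Perm n) (f : n → α) :
    ∑ j, single (π j) (π j) (f j) = diagonal fun a => f (π.symm a) := by
  rw [← sum_single_eq_diagonal, ← Equiv.sum_comp π fun a => single a a (f (π.symm a))]
  simp only [Equiv.symm_apply_apply]

theorem sum_diagonal [AddCommMonoid α] {ι : Type*} (s : Finset ι) (f : ι → n → α) :
    ∑ i ∈ s, diagonal (f i) = diagonal (∑ i ∈ s, f i) :=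
  (map_sum (diagonalAddMonoidHom n α) f s).symm

variable [Fintype n] [Semiring α] [StarRing α]

theorem sioKraus_conjTranspose_mul_self (c : n → α) (π : Equiv.Perm n) :
    (sioKraus c π)ᴴ * sioKraus c π = diagonal fun j => star (c j) * c j := by
  rw [sioKraus_eq_submatrix, conjTranspose_submatrix, submatrix_mul_equiv _ _ _ π.symm,
    diagonal_conjTranspose, diagonal_mul_diagonal, submatrix_id_id]
  rfl

theorem sioKraus_mul_mul_conjTranspose (c : n → α) (π : Equiv.Perm n) (ρ : Matrix n n α) :
    sioKraus c π * ρ * (sioKraus c π)ᴴ =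
      (diagonal c * ρ * (diagonal c)ᴴ).submatrix π.symm π.symm := by
  rw [submatrix_mul _ _ _ id _ Function.bijective_id,
    submatrix_mul _ _ _ id _ Function.bijective_id, submatrix_id_id, sioKraus_eq_submatrix,
    conjTranspose_submatrix]

theorem diagonal_diag_sioKraus_mul_mul_conjTranspose (c : n → α) (π : Equiv.Perm n)
    (ρ : Matrix n n α) :
    diagonal (diag (sioKraus c π * ρ * (sioKraus c π)ᴴ)) =
      ∑ j, single (π j) j (c j) * ρ * (single (π j) j (c j))ᴴ := by
  simp only [conjTranspose_single, single_mul_mul_single, sum_single_perm_eq_diagonal,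
    sioKraus_mul_mul_conjTranspose]
  congr 1
  ext a
  simp [diagonal_conjTranspose, mul_diagonal, diagonal_mul]

theorem isDiag_single_mul_mul_conjTranspose_single (i j : n) (x : α) (ρ : Matrix n n α) :
    (single i j x * ρ * (single i j x)ᴴ).IsDiag := by
  rw [conjTranspose_single, single_mul_mul_single, ← diagonal_single]
  exact isDiag_diagonal _

end Matrix

open Matrix

theorem isSIO_iff {d : ℕ} (Φ : Matrix (Fin d) (Fin d) ℂ → Matrix (Fin d) (Fin d) ℂ) :
    IsSIO Φ ↔ ∃ (N : ℕ) (c : Fin N → Fin d → ℂ) (π : Fin N → Equiv.Perm (Fin d)),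
      ∑ n, (sioKraus (c n) (π n))ᴴ * sioKraus (c n) (π n) = 1 ∧
      ∀ ρ, Φ ρ = ∑ n, sioKraus (c n) (π n) * ρ * (sioKraus (c n) (π n))ᴴ :=
  Iff.rfl

theorem sum_star_mul_self_eq_one_iff {ι : Type*} [Fintype ι] (z : ι → ℂ) :
    ∑ i, star (z i) * z i = 1 ↔ ∑ i, Complex.normSq (z i) = 1 := by
  rw [← Complex.ofReal_inj]
  simp [Complex.normSq_eq_conj_mul_self]

theorem IsSIO.exists_single_kraus_of_isDiag {d : ℕ}
    {Φ : Matrix (Fin d) (Fin d) ℂ → Matrix (Fin d) (Fin d) ℂ} (hΦ : IsSIO Φ)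
    (hdiag : ∀ ρ : Matrix (Fin d) (Fin d) ℂ, ρ.PosSemidef → ρ.trace = 1 → (Φ ρ).IsDiag) :
    ∃ (N : ℕ) (c : Fin N → Fin d → ℂ) (π : Fin N → Equiv.Perm (Fin d)),
      (∀ j, ∑ n, Complex.normSq (c n j) = 1) ∧
      ∀ ρ, Φ ρ = ∑ n, ∑ j, single (π n j) j (c n j) * ρ * (single (π n j) j (c n j))ᴴ := by
  obtain ⟨N, c, π, hone, hrep⟩ := (isSIO_iff Φ).1 hΦ
  have hL : ∀ ρ, Φ ρ = krausMap (fun n => sioKraus (c n) (π n)) ρ := fun ρ =>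
    (hrep ρ).trans (krausMap_apply _ _).symm
  refine ⟨N, c, π, fun j => ?_, fun ρ => ?_⟩
  · simp only [sioKraus_conjTranspose_mul_self] at hone
    have hjj := congr_fun₂ hone j j
    rw [Matrix.sum_apply] at hjj
    simp only [diagonal_apply_eq, one_apply_eq] at hjj
    exact (sum_star_mul_self_eq_one_iff _).1 hjj
  · have hΦρ : (Φ ρ).IsDiag := by
      rw [hL]
      exact isDiag_of_isDiag_on_density _ (fun σ hσ htr => hL σ ▸ hdiag σ hσ htr) ρ
    calc Φ ρ = diagonal (diag (Φ ρ)) := hΦρ.diagonal_diag.symm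
      _ = ∑ n, diagonal (diag (sioKraus (c n) (π n) * ρ * (sioKraus (c n) (π n))ᴴ)) := by
        rw [hrep, diag_sum, sum_diagonal]
      _ = _ := by simp only [diagonal_diag_sioKraus_mul_mul_conjTranspose]

theorem Fin.sum_finProdFinEquiv_symm {M : Type*} [AddCommMonoid M] {N d : ℕ}
    (f : Fin N → Fin d → M) :
    ∑ m, f (finProdFinEquiv.symm m).1 (finProdFinEquiv.symm m).2 = ∑ n, ∑ j, f n j :=
  (finProdFinEquiv.symm.sum_comp fun p => f p.1 p.2).trans (Fintype.sum_prod_type _)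

theorem sum_sum_conjTranspose_single_mul_single {d N : ℕ} (c : Fin N → Fin d → ℂ)
    (π : Fin N → Equiv.Perm (Fin d)) (hnorm : ∀ j, ∑ n, Complex.normSq (c n j) = 1) :
    ∑ n, ∑ j, (single (π n j) j (c n j))ᴴ * single (π n j) j (c n j) = 1 := by
  simp only [conjTranspose_single, single_mul_single_same, sum_single_eq_diagonal,
    sum_diagonal, Finset.sum_fn, (sum_star_mul_self_eq_one_iff _).2 (hnorm _), diagonal_one]

theorem isSIO_and_isCBCfn_of_single_kraus {d N : ℕ}
    {Φ : Matrix (Fin d) (Fin d) ℂ → Matrix (Fin d) (Fin d) ℂ} (c : Fin N → Fin d → ℂ)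
    (π : Fin N → Equiv.Perm (Fin d)) (hnorm : ∀ j, ∑ n, Complex.normSq (c n j) = 1)
    (hrep : ∀ ρ, Φ ρ = ∑ n, ∑ j, single (π n j) j (c n j) * ρ * (single (π n j) j (c n j))ᴴ) :
    IsSIO Φ ∧ IsCBCfn Φ := by
  set e : Fin (N * d) ≃ Fin N × Fin d := finProdFinEquiv.symm
  set K : Fin (N * d) → Matrix (Fin d) (Fin d) ℂ := fun m =>
    single (π (e m).1 (e m).2) (e m).2 (c (e m).1 (e m).2)
  have hone : ∑ m, (K m)ᴴ * K m = 1 :=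
    (Fin.sum_finProdFinEquiv_symm fun n j =>
      (single (π n j) j (c n j))ᴴ * single (π n j) j (c n j)).trans
      (sum_sum_conjTranspose_single_mul_single c π hnorm)
  have hrepK : ∀ ρ, Φ ρ = ∑ m, K m * ρ * (K m)ᴴ := fun ρ =>
    (hrep ρ).trans (Fin.sum_finProdFinEquiv_symm fun n j =>
      single (π n j) j (c n j) * ρ * (single (π n j) j (c n j))ᴴ).symm
  refine ⟨(isSIO_iff Φ).2 ⟨N * d, fun m => Pi.single (e m).2 (c (e m).1 (e m).2),
      fun m => π (e m).1, ?_, fun ρ => ?_⟩,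
    ⟨N * d, K, hone, fun m A _ => isDiag_single_mul_mul_conjTranspose_single _ _ _ A, hrepK⟩,
    fun ρ _ _ => ?_⟩
  · simpa only [sioKraus_pi_single] using hone
  · simpa only [sioKraus_pi_single] using hrepK ρ
  · rw [hrepK]
    exact Finset.sum_induction _ IsDiag (fun _ _ => IsDiag.add) isDiag_zero fun m _ =>
      isDiag_single_mul_mul_conjTranspose_single _ _ _ ρ

/-- A quantum channel `Φ` on `ℂ^d` is both strictly incoherent and coherence
breaking if and only if it admits a Kraus representation `{K_{nj}}` with
`K_{nj} = d_{nj} |π_n(j)⟩⟨j|`, where each `π_n` is a permutation of `{0,…,d−1}` and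
`∑_n |d_{nj}|² = 1` for each `j`. -/
theorem sio_and_cbc_iff (d : ℕ)
    (Φ : Matrix (Fin d) (Fin d) ℂ → Matrix (Fin d) (Fin d) ℂ) :
    (IsSIO Φ ∧ IsCBCfn Φ) ↔
      ∃ (N : ℕ) (c : Fin N → Fin d → ℂ) (π : Fin N → Equiv.Perm (Fin d)),
        (∀ j, ∑ n, Complex.normSq (c n j) = 1) ∧
        ∀ ρ, Φ ρ = ∑ n, ∑ j,
          (c n j • Matrix.single (π n j) j (1 : ℂ)) * ρ *
            (c n j • Matrix.single (π n j) j (1 : ℂ))ᴴ := by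
  simp only [smul_single, smul_eq_mul, mul_one]
  constructor
  · rintro ⟨hsio, -, hdiag⟩
    exact hsio.exists_single_kraus_of_isDiag hdiag
  · rintro ⟨N, c, π, hnorm, hrep⟩
    exact isSIO_and_isCBCfn_of_single_kraus c π hnorm hrep
end
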